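/- Suppose {1, …, n} = V₁ ∪ V₂ is a partition into two nonempty disjoint sets such that: w₁ is constant on V₁ and constant on V₂, with the value on V₁ strictly greater than the value on V₂; and ψ is constant on V₁ and constant on V₂ (these symmetry properties hold for non-regular networks with two types of nodes, such as core–periphery and complete bipartite networks). Assume also that a is not proportional to 𝟙 and that G is non-regular. (i) If (Σ_{i∈V₁} aᵢ)/|V₁| > (Σ_{j∈V₂} aⱼ)/|V₂|, then there exists δ̄ ∈ [0, 1/λ₁) such that for every δ ∈ (δ̄, 1/λ₁): V(p⁰(δ), δ) > V(p^ur, δ) and Π(p⁰(δ), δ) < Π(p^ur, δ). (ii) If (Σ_{i∈V₁} aᵢ)/|V₁| < (Σ_{j∈V₂} aⱼ)/|V₂|, then there exists δ̿ ∈ [0, 1/λ₁) such that for every δ ∈ (δ̿, 1/λ₁): V(p⁰(δ), δ) < V(p^ur, δ) and Π(p⁰(δ), δ) < Π(p^ur, δ). -/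

import Mathlib

open Matrix

noncomputable def Hmat {n : ℕ} (G : Matrix (Fin n) (Fin n) ℝ) (δ : ℝ) :
    Matrix (Fin n) (Fin n) ℝ :=
  (1 - δ • G)⁻¹

/-- Monopolist profit Π(p) = (p − c)ᵀ H (a − p). -/
noncomputable def profit {n : ℕ} (G : Matrix (Fin n) (Fin n) ℝ) (δ : ℝ)
    (a c p : Fin n → ℝ) : ℝ :=
  (p - c) ⬝ᵥ (Hmat G δ *ᵥ (a - p))

/-- Aggregate consumer surplus V(p) = (1/2)(a − p)ᵀ H² (a − p). -/
noncomputable def surplus {n : ℕ} (G : Matrix (Fin n) (Fin n) ℝ) (δ : ℝ)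
    (a p : Fin n → ℝ) : ℝ :=
  (1 / 2 : ℝ) * ((a - p) ⬝ᵥ ((Hmat G δ * Hmat G δ) *ᵥ (a - p)))

/-- Unrestricted optimal price p^ur = (a + c)/2. -/
noncomputable def pUR {n : ℕ} (a c : Fin n → ℝ) : Fin n → ℝ :=
  (1 / 2 : ℝ) • (a + c)

/-- The Pareto price family 𝕡(η). -/
noncomputable def pFam {n : ℕ} (G : Matrix (Fin n) (Fin n) ℝ) (δ : ℝ)
    (a c : Fin n → ℝ) (η : ℝ) : Fin n → ℝ :=
  pUR a c - (η / (2 - η)) • ((1 - (2 * δ / (2 - η)) • G)⁻¹ *ᵥ ((1 / 2 : ℝ) • (a - c)))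

/-- The all-ones vector 𝟙. -/
def onesVec (n : ℕ) : Fin n → ℝ := fun _ => 1

/-- The sufficient statistic 𝒜(p) = ⟨w₁, p − p^ur⟩ / ⟨w₁, (a−c)/2⟩. -/
noncomputable def AAstat {n : ℕ} (w1 a c p : Fin n → ℝ) : ℝ :=
  (w1 ⬝ᵥ (p - pUR a c)) / (w1 ⬝ᵥ ((1 / 2 : ℝ) • (a - c)))

/-- Profit ratio R_Π(p, δ). -/
noncomputable def Rpi {n : ℕ} (G : Matrix (Fin n) (Fin n) ℝ) (δ : ℝ)
    (a c p : Fin n → ℝ) : ℝ :=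
  profit G δ a c p / profit G δ a c (pUR a c)

/-- Consumer-surplus ratio R_V(p, δ). -/
noncomputable def Rv {n : ℕ} (G : Matrix (Fin n) (Fin n) ℝ) (δ : ℝ)
    (a c p : Fin n → ℝ) : ℝ :=
  surplus G δ a p / surplus G δ a (pUR a c)

/-- The network statistic ψ. -/
noncomputable def psiVec {n : ℕ} [NeZero n] (w : Fin n → Fin n → ℝ)
    (lam : Fin n → ℝ) : Fin n → ℝ :=
  (∑ i ∈ Finset.univ.erase (0 : Fin n),
      (w i ⬝ᵥ onesVec n) ^ 2 / (1 - lam i / lam 0)) • w 0 -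
    ∑ i ∈ Finset.univ.erase (0 : Fin n),
      ((w i ⬝ᵥ onesVec n) * (w 0 ⬝ᵥ onesVec n) / (1 - lam i / lam 0)) • w i

/-- The optimal uniform price p⁰(δ) (with c = 0). -/
noncomputable def p0fn {n : ℕ} (G : Matrix (Fin n) (Fin n) ℝ) (δ : ℝ)
    (a : Fin n → ℝ) : Fin n → ℝ :=
  ((onesVec n ⬝ᵥ (Hmat G δ *ᵥ pUR a 0)) /
      (onesVec n ⬝ᵥ (Hmat G δ *ᵥ onesVec n))) • onesVec n

/-! With an orthonormal eigenbasis, `H = (1 - δG)⁻¹ = ∑ᵢ wᵢwᵢᵀ / (1 - δλᵢ)`.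

Profit is a concave quadratic form in `p` with maximum at `p^ur`, and since `H` is positive
definite every `p ≠ p^ur` loses profit; the uniform price is such a `p` because `a` is not
constant.

For surplus, the first-order condition `𝟙ᵀH(p^ur - p⁰) = 0` makes the `w₁`-coordinate of
`p^ur - p⁰` of order `1 - δλ₁`. Hence `(1 - δλ₁)·(V(p⁰) - V(p^ur))` is a combination of the
non-principal parts of the spectral sums, which stay bounded as `δ → 1/λ₁`, and it tends to
`⟨w₁, p^ur⟩⟨ψ, p^ur⟩ / ⟨w₁, 𝟙⟩²`. On a two-type network `ψ ⊥ 𝟙` and `⟨ψ, w₁⟩ > 0`, so `⟨ψ, a⟩`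
is a positive multiple of the difference of the block averages of `a`, which fixes the sign of
the surplus gap for `δ` close to `1/λ₁`. -/

open Finset Filter Topology

section SymmetricForm

variable {ι : Type*} [Fintype ι] {M : Matrix ι ι ℝ}

lemma dotProduct_mulVec_comm_of_isSymm (hM : M.IsSymm) (x y : ι → ℝ) :
    x ⬝ᵥ (M *ᵥ y) = y ⬝ᵥ (M *ᵥ x) := by
  rw [dotProduct_mulVec, ← mulVec_transpose, hM.eq, dotProduct_comm]

lemma add_dotProduct_mulVec_sub_of_isSymm (hM : M.IsSymm) (x y : ι → ℝ) :
    (x + y) ⬝ᵥ (M *ᵥ (x - y)) = x ⬝ᵥ (M *ᵥ x) - y ⬝ᵥ (M *ᵥ y) := by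
  simp only [mulVec_sub, add_dotProduct, dotProduct_sub, dotProduct_mulVec_comm_of_isSymm hM y x]
  ring

lemma half_dotProduct_mulVec_add_sub_of_isSymm (hM : M.IsSymm) (x y : ι → ℝ) :
    (1 / 2 : ℝ) * ((x + y) ⬝ᵥ (M *ᵥ (x + y))) - (1 / 2 : ℝ) * (x ⬝ᵥ (M *ᵥ x)) =
      y ⬝ᵥ (M *ᵥ (x + (1 / 2 : ℝ) • y)) := by
  simp only [mulVec_add, mulVec_smul, add_dotProduct, dotProduct_add, dotProduct_smul,
    smul_eq_mul, dotProduct_mulVec_comm_of_isSymm hM y x]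
  ring

end SymmetricForm

section Profit

variable {n : ℕ} {G : Matrix (Fin n) (Fin n) ℝ} {δ : ℝ} {a c p : Fin n → ℝ}

lemma profit_pUR_sub_profit (hH : (Hmat G δ).IsSymm) :
    profit G δ a c (pUR a c) - profit G δ a c p =
      (p - pUR a c) ⬝ᵥ (Hmat G δ *ᵥ (p - pUR a c)) := by
  have h₁ : p - c = (pUR a c - c) + (p - pUR a c) := by abel
  have h₂ : a - p = (pUR a c - c) - (p - pUR a c) := by
    rw [pUR]; module
  have h₃ : a - pUR a c = pUR a c - c := by rw [pUR]; module
  rw [profit, profit, h₁, h₂, h₃, add_dotProduct_mulVec_sub_of_isSymm hH]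
  ring

lemma profit_lt_profit_pUR (hH : (Hmat G δ).PosDef) (hp : p ≠ pUR a c) :
    profit G δ a c p < profit G δ a c (pUR a c) := by
  have hpos := hH.dotProduct_mulVec_pos (sub_ne_zero.mpr hp)
  rw [star_trivial, ← profit_pUR_sub_profit (isHermitian_iff_isSymm.mp hH.isHermitian)] at hpos
  linarith

end Profit

section Conjugation

variable {ι : Type*} [Fintype ι] [DecidableEq ι] {W : Matrix ι ι ℝ}

lemma transpose_mul_mul_mul_transpose_mul_mul (hW : W * Wᵀ = 1) (D D' : Matrix ι ι ℝ) :
    (Wᵀ * D * W) * (Wᵀ * D' * W) = Wᵀ * (D * D') * W := by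
  simp only [Matrix.mul_assoc]
  rw [← Matrix.mul_assoc W Wᵀ, hW, Matrix.one_mul]

lemma transpose_mul_mul_pow (hW : W * Wᵀ = 1) (D : Matrix ι ι ℝ) (k : ℕ) :
    (Wᵀ * D * W) ^ k = Wᵀ * D ^ k * W := by
  induction k with
  | zero => simpa using (mul_eq_one_comm.mp hW).symm
  | succ k ih => rw [pow_succ, ih, transpose_mul_mul_mul_transpose_mul_mul hW, pow_succ]

end Conjugation

section Spectral

variable {n : ℕ} {G : Matrix (Fin n) (Fin n) ℝ} {w : Fin n → Fin n → ℝ} {lam : Fin n → ℝ}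
  {δ : ℝ}

lemma mul_transpose_eq_one_of_orthonormal
    (horth : ∀ i j, w i ⬝ᵥ w j = if i = j then (1 : ℝ) else 0) :
    of w * (of w)ᵀ = 1 := by
  ext i j
  simpa [mul_apply, one_apply, dotProduct] using horth i j

lemma mul_transpose_eq_transpose_mul_diagonal (heig : ∀ i, G *ᵥ w i = lam i • w i) :
    G * (of w)ᵀ = (of w)ᵀ * diagonal lam := by
  ext k i
  rw [mul_diagonal, mul_apply]
  simpa [mulVec, dotProduct, mul_comm] using congrFun (heig i) k

lemma Hmat_eq_transpose_mul_diagonal_mul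
    (horth : ∀ i j, w i ⬝ᵥ w j = if i = j then (1 : ℝ) else 0)
    (heig : ∀ i, G *ᵥ w i = lam i • w i) (hδ : ∀ i, 1 - δ * lam i ≠ 0) :
    Hmat G δ = (of w)ᵀ * diagonal (fun i => (1 - δ * lam i)⁻¹) * of w := by
  have hW := mul_transpose_eq_one_of_orthonormal horth
  have hWtW : (of w)ᵀ * of w = 1 := mul_eq_one_comm.mp hW
  have hG : G = (of w)ᵀ * diagonal lam * of w := by
    rw [← mul_transpose_eq_transpose_mul_diagonal heig, Matrix.mul_assoc, hWtW, Matrix.mul_one]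
  have hE : diagonal (fun i => 1 - δ * lam i) = 1 - δ • diagonal lam := by
    ext i j
    by_cases h : i = j <;> simp [one_apply, h]
  have hres : 1 - δ • G = (of w)ᵀ * diagonal (fun i => 1 - δ * lam i) * of w := by
    rw [hE, Matrix.mul_sub, Matrix.sub_mul, Matrix.mul_one, hWtW, Matrix.mul_smul,
      Matrix.smul_mul, ← hG]
  rw [Hmat, hres]
  apply inv_eq_right_inv
  rw [transpose_mul_mul_mul_transpose_mul_mul hW, diagonal_mul_diagonal]
  simp [mul_inv_cancel₀ (hδ _), hWtW]

lemma dotProduct_Hmat_pow_mulVec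
    (horth : ∀ i j, w i ⬝ᵥ w j = if i = j then (1 : ℝ) else 0)
    (heig : ∀ i, G *ᵥ w i = lam i • w i) (hδ : ∀ i, 1 - δ * lam i ≠ 0) (k : ℕ)
    (x y : Fin n → ℝ) :
    x ⬝ᵥ (Hmat G δ ^ k *ᵥ y) = ∑ i, (w i ⬝ᵥ x) * (w i ⬝ᵥ y) / (1 - δ * lam i) ^ k := by
  rw [Hmat_eq_transpose_mul_diagonal_mul horth heig hδ,
    transpose_mul_mul_pow (mul_transpose_eq_one_of_orthonormal horth), diagonal_pow,
    ← mulVec_mulVec, ← mulVec_mulVec, dotProduct_mulVec, vecMul_transpose]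
  refine sum_congr rfl fun i _ => ?_
  rw [mulVec_diagonal, Pi.pow_apply, inv_pow]
  change (w i ⬝ᵥ x) * (_ * (w i ⬝ᵥ y)) = _
  ring

end Spectral

section ResolventTail

variable {n : ℕ} [NeZero n] {G : Matrix (Fin n) (Fin n) ℝ} {w : Fin n → Fin n → ℝ}
  {lam : Fin n → ℝ} {δ : ℝ}

noncomputable def resolventTail (w : Fin n → Fin n → ℝ) (lam : Fin n → ℝ) (k : ℕ) (δ : ℝ)
    (x y : Fin n → ℝ) : ℝ :=
  ∑ i ∈ univ.erase 0, (w i ⬝ᵥ x) * (w i ⬝ᵥ y) / (1 - δ * lam i) ^ k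

lemma dotProduct_Hmat_pow_mulVec_eq_add_resolventTail
    (horth : ∀ i j, w i ⬝ᵥ w j = if i = j then (1 : ℝ) else 0)
    (heig : ∀ i, G *ᵥ w i = lam i • w i) (hδ : ∀ i, 1 - δ * lam i ≠ 0) (k : ℕ)
    (x y : Fin n → ℝ) :
    x ⬝ᵥ (Hmat G δ ^ k *ᵥ y) =
      (w 0 ⬝ᵥ x) * (w 0 ⬝ᵥ y) / (1 - δ * lam 0) ^ k + resolventTail w lam k δ x y := by
  rw [dotProduct_Hmat_pow_mulVec horth heig hδ, ← add_sum_erase _ _ (mem_univ 0)]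
  rfl

lemma tendsto_resolventTail {l : Filter ℝ} {c : ℝ} (hl : l ≤ 𝓝 c)
    (hc : ∀ i, i ≠ 0 → 1 - c * lam i ≠ 0) {x y : ℝ → Fin n → ℝ} {x₀ y₀ : Fin n → ℝ}
    (hx : Tendsto x l (𝓝 x₀)) (hy : Tendsto y l (𝓝 y₀)) (k : ℕ) :
    Tendsto (fun δ => resolventTail w lam k δ (x δ) (y δ)) l
      (𝓝 (resolventTail w lam k c x₀ y₀)) := by
  refine tendsto_finsetSum _ fun i hi =>
    Tendsto.div ?_ ?_ (pow_ne_zero k (hc i (ne_of_mem_erase hi)))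
  · have hwi : Continuous fun v : Fin n → ℝ => w i ⬝ᵥ v :=
      continuous_const.dotProduct continuous_id
    exact ((hwi.tendsto x₀).comp hx).mul ((hwi.tendsto y₀).comp hy)
  · exact (tendsto_const_nhds.sub ((tendsto_id.mono_left hl).mul_const _)).pow k

lemma psiVec_dotProduct (x : Fin n → ℝ) :
    psiVec w lam ⬝ᵥ x =
      resolventTail w lam 1 (1 / lam 0) (onesVec n) (onesVec n) * (w 0 ⬝ᵥ x) -
        (w 0 ⬝ᵥ onesVec n) * resolventTail w lam 1 (1 / lam 0) (onesVec n) x := by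
  simp only [psiVec, resolventTail, sub_dotProduct, smul_dotProduct, sum_dotProduct,
    smul_eq_mul, pow_one, one_div_mul_eq_div, mul_sum, sq]
  congr 1
  refine sum_congr rfl fun i _ => ?_
  ring

lemma psiVec_dotProduct_onesVec : psiVec w lam ⬝ᵥ onesVec n = 0 := by
  rw [psiVec_dotProduct]
  ring

lemma psiVec_dotProduct_w_zero (horth : ∀ i j, w i ⬝ᵥ w j = if i = j then (1 : ℝ) else 0) :
    psiVec w lam ⬝ᵥ w 0 = resolventTail w lam 1 (1 / lam 0) (onesVec n) (onesVec n) := by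
  have htail : resolventTail w lam 1 (1 / lam 0) (onesVec n) (w 0) = 0 :=
    sum_eq_zero fun i hi => by simp [horth i 0, ne_of_mem_erase hi]
  rw [psiVec_dotProduct, htail, horth]
  simp

lemma one_sub_one_div_mul_pos (hlam0 : 0 < lam 0) {i : Fin n} (hi : lam i < lam 0) :
    0 < 1 - 1 / lam 0 * lam i := by
  rw [one_div_mul_eq_div, sub_pos, div_lt_one hlam0]
  exact hi

lemma resolventTail_onesVec_pos (hlam0 : 0 < lam 0) (hgap : ∀ i, i ≠ 0 → lam i < lam 0)
    (hnonreg : ∃ i : Fin n, i ≠ 0 ∧ w i ⬝ᵥ onesVec n ≠ 0) :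
    0 < resolventTail w lam 1 (1 / lam 0) (onesVec n) (onesVec n) := by
  have hpos : ∀ i, i ≠ 0 → 0 < (1 - 1 / lam 0 * lam i) ^ 1 :=
    fun i hi => pow_pos (one_sub_one_div_mul_pos hlam0 (hgap i hi)) 1
  obtain ⟨i, hi, hwi⟩ := hnonreg
  refine sum_pos' (fun j hj => ?_) ⟨i, mem_erase.mpr ⟨hi, mem_univ i⟩, ?_⟩
  · exact div_nonneg (mul_self_nonneg _) (hpos j (ne_of_mem_erase hj)).le
  · exact div_pos (mul_self_pos.mpr hwi) (hpos i hi)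

end ResolventTail

section TwoTypes

variable {ι : Type*} [Fintype ι] [DecidableEq ι] {V₁ V₂ : Finset ι}

lemma dotProduct_eq_of_const_on_partition (hdisj : Disjoint V₁ V₂) (hcover : V₁ ∪ V₂ = univ)
    {f : ι → ℝ} {u v : ℝ} (hu : ∀ i ∈ V₁, f i = u) (hv : ∀ j ∈ V₂, f j = v) (x : ι → ℝ) :
    f ⬝ᵥ x = u * ∑ i ∈ V₁, x i + v * ∑ j ∈ V₂, x j := by
  rw [dotProduct, ← hcover, sum_union hdisj, mul_sum, mul_sum]
  congr 1
  · exact sum_congr rfl fun i hi => by rw [hu i hi]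
  · exact sum_congr rfl fun j hj => by rw [hv j hj]

lemma dotProduct_eq_mul_sub_average (hdisj : Disjoint V₁ V₂) (hcover : V₁ ∪ V₂ = univ)
    (hV₁ : V₁.Nonempty) (hV₂ : V₂.Nonempty) {ψ v : ι → ℝ} {ψ₁ ψ₂ α β : ℝ} (hαβ : α ≠ β)
    (hψ₁ : ∀ i ∈ V₁, ψ i = ψ₁) (hψ₂ : ∀ j ∈ V₂, ψ j = ψ₂)
    (hv₁ : ∀ i ∈ V₁, v i = α) (hv₂ : ∀ j ∈ V₂, v j = β) (hψ : ∑ i, ψ i = 0) (x : ι → ℝ) :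
    ψ ⬝ᵥ x = ψ ⬝ᵥ v / (α - β) *
      ((∑ i ∈ V₁, x i) / #V₁ - (∑ j ∈ V₂, x j) / #V₂) := by
  have hk₁ : (#V₁ : ℝ) ≠ 0 := Nat.cast_ne_zero.mpr hV₁.card_pos.ne'
  have hk₂ : (#V₂ : ℝ) ≠ 0 := Nat.cast_ne_zero.mpr hV₂.card_pos.ne'
  have hsplit := dotProduct_eq_of_const_on_partition hdisj hcover hψ₁ hψ₂
  have hone : ψ₁ * #V₁ + ψ₂ * #V₂ = 0 := by
    simpa [dotProduct, ← hψ] using (hsplit fun _ => 1).symm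
  have hv : ψ ⬝ᵥ v = ψ₁ * (α * #V₁) + ψ₂ * (β * #V₂) := by
    rw [hsplit, sum_congr rfl hv₁, sum_congr rfl hv₂]
    simp [mul_comm]
  have hψ₂' : ψ₂ = -(ψ₁ * #V₁) / #V₂ := by
    rw [eq_div_iff hk₂]
    linarith
  rw [hsplit, hv, hψ₂']
  field_simp [sub_ne_zero.mpr hαβ]
  ring

end TwoTypes

section UniformPricing

variable {n : ℕ} {G : Matrix (Fin n) (Fin n) ℝ} {w : Fin n → Fin n → ℝ} {lam : Fin n → ℝ}
  {δ : ℝ} {a : Fin n → ℝ}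

noncomputable def uniformPrice (G : Matrix (Fin n) (Fin n) ℝ) (δ : ℝ) (a : Fin n → ℝ) : ℝ :=
  (onesVec n ⬝ᵥ (Hmat G δ *ᵥ pUR a 0)) / (onesVec n ⬝ᵥ (Hmat G δ *ᵥ onesVec n))

lemma p0fn_eq_smul : p0fn G δ a = uniformPrice G δ a • onesVec n := rfl

lemma p0fn_ne_pUR (haprop : ¬ ∃ t : ℝ, a = t • onesVec n) : p0fn G δ a ≠ pUR a 0 := by
  intro h
  refine haprop ⟨2 * uniformPrice G δ a, funext fun k => ?_⟩
  have hk := congrFun h k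
  simp only [p0fn_eq_smul, pUR, onesVec, Pi.smul_apply, Pi.add_apply, Pi.zero_apply,
    smul_eq_mul] at hk ⊢
  linarith

lemma onesVec_dotProduct_Hmat_mulVec_pUR_sub_p0fn
    (hden : onesVec n ⬝ᵥ (Hmat G δ *ᵥ onesVec n) ≠ 0) :
    onesVec n ⬝ᵥ (Hmat G δ *ᵥ (pUR a 0 - p0fn G δ a)) = 0 := by
  rw [p0fn_eq_smul, mulVec_sub, mulVec_smul, dotProduct_sub, dotProduct_smul, smul_eq_mul,
    uniformPrice, div_mul_cancel₀ _ hden, sub_self]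

lemma surplus_p0fn_sub_surplus_pUR (hH : (Hmat G δ).IsSymm) :
    surplus G δ a (p0fn G δ a) - surplus G δ a (pUR a 0) =
      (pUR a 0 - p0fn G δ a) ⬝ᵥ
        (Hmat G δ ^ 2 *ᵥ (pUR a 0 + (1 / 2 : ℝ) • (pUR a 0 - p0fn G δ a))) := by
  have h₁ : a - p0fn G δ a = pUR a 0 + (pUR a 0 - p0fn G δ a) := by rw [pUR]; module
  have h₂ : a - pUR a 0 = pUR a 0 := by rw [pUR]; module
  rw [surplus, surplus, ← sq, h₁, h₂, half_dotProduct_mulVec_add_sub_of_isSymm (hH.pow 2)]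

variable [NeZero n]

lemma one_sub_mul_pos (hlam0 : 0 < lam 0) {i : Fin n} (hi : lam i ≤ lam 0)
    (hδ : δ ∈ Set.Ico 0 (1 / lam 0)) : 0 < 1 - δ * lam i := by
  have h₀ : δ * lam 0 < 1 := (lt_div_iff₀ hlam0).mp hδ.2
  nlinarith [mul_le_mul_of_nonneg_left hi hδ.1]

lemma one_sub_mul_ne_zero (hlam0 : 0 < lam 0) (hgap : ∀ i, i ≠ 0 → lam i < lam 0)
    (hδ : δ ∈ Set.Ico 0 (1 / lam 0)) (i : Fin n) : 1 - δ * lam i ≠ 0 := by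
  refine (one_sub_mul_pos hlam0 ?_ hδ).ne'
  rcases eq_or_ne i 0 with rfl | hi
  exacts [le_rfl, (hgap i hi).le]

lemma tendsto_one_sub_mul_nhdsLT (hlam0 : 0 < lam 0) :
    Tendsto (fun δ => 1 - δ * lam 0) (𝓝[<] (1 / lam 0)) (𝓝 0) := by
  have hcont : Continuous fun δ : ℝ => 1 - δ * lam 0 := by fun_prop
  have h := hcont.tendsto (1 / lam 0)
  rw [one_div_mul_cancel hlam0.ne', sub_self] at h
  exact h.mono_left nhdsWithin_le_nhds

lemma uniformPrice_eq (horth : ∀ i j, w i ⬝ᵥ w j = if i = j then (1 : ℝ) else 0)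
    (heig : ∀ i, G *ᵥ w i = lam i • w i) (hδ : ∀ i, 1 - δ * lam i ≠ 0) :
    uniformPrice G δ a =
      ((w 0 ⬝ᵥ onesVec n) * (w 0 ⬝ᵥ pUR a 0) +
          (1 - δ * lam 0) * resolventTail w lam 1 δ (onesVec n) (pUR a 0)) /
        ((w 0 ⬝ᵥ onesVec n) ^ 2 +
          (1 - δ * lam 0) * resolventTail w lam 1 δ (onesVec n) (onesVec n)) := by
  have h := dotProduct_Hmat_pow_mulVec_eq_add_resolventTail horth heig hδ 1 (onesVec n)
  rw [pow_one] at h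
  rw [uniformPrice, h, h]
  field_simp [hδ 0]

lemma tendsto_uniformPrice (horth : ∀ i j, w i ⬝ᵥ w j = if i = j then (1 : ℝ) else 0)
    (heig : ∀ i, G *ᵥ w i = lam i • w i) (hgap : ∀ i, i ≠ 0 → lam i < lam 0)
    (hlam0 : 0 < lam 0) (hB : w 0 ⬝ᵥ onesVec n ≠ 0) :
    Tendsto (fun δ => uniformPrice G δ a) (𝓝[<] (1 / lam 0))
      (𝓝 ((w 0 ⬝ᵥ pUR a 0) / (w 0 ⬝ᵥ onesVec n))) := by
  have hc : ∀ i, i ≠ 0 → 1 - 1 / lam 0 * lam i ≠ 0 :=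
    fun i hi => (one_sub_one_div_mul_pos hlam0 (hgap i hi)).ne'
  have he := tendsto_one_sub_mul_nhdsLT hlam0
  have htail (x : Fin n → ℝ) : Tendsto (fun δ => resolventTail w lam 1 δ (onesVec n) x)
      (𝓝[<] (1 / lam 0)) (𝓝 (resolventTail w lam 1 (1 / lam 0) (onesVec n) x)) :=
    tendsto_resolventTail nhdsWithin_le_nhds hc tendsto_const_nhds tendsto_const_nhds 1
  have hval : ((w 0 ⬝ᵥ onesVec n) * (w 0 ⬝ᵥ pUR a 0) +
      0 * resolventTail w lam 1 (1 / lam 0) (onesVec n) (pUR a 0)) /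
        ((w 0 ⬝ᵥ onesVec n) ^ 2 + 0 * resolventTail w lam 1 (1 / lam 0) (onesVec n) (onesVec n)) =
      (w 0 ⬝ᵥ pUR a 0) / (w 0 ⬝ᵥ onesVec n) := by
    rw [zero_mul, add_zero, zero_mul, add_zero, sq, mul_div_mul_left _ _ hB]
  rw [← hval]
  refine Tendsto.congr' ?_ ((tendsto_const_nhds.add (he.mul (htail _))).div
    (tendsto_const_nhds.add (he.mul (htail _))) (by simpa using pow_ne_zero 2 hB))
  filter_upwards [Ioo_mem_nhdsLT (one_div_pos.mpr hlam0)] with δ hδ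
  exact (uniformPrice_eq horth heig (one_sub_mul_ne_zero hlam0 hgap ⟨hδ.1.le, hδ.2⟩)).symm

end UniformPricing

section SurplusGap

variable {n : ℕ} [NeZero n] {G : Matrix (Fin n) (Fin n) ℝ} {w : Fin n → Fin n → ℝ}
  {lam : Fin n → ℝ} {δ : ℝ} {a : Fin n → ℝ}

lemma one_sub_mul_mul_surplus_sub_eq
    (horth : ∀ i j, w i ⬝ᵥ w j = if i = j then (1 : ℝ) else 0)
    (heig : ∀ i, G *ᵥ w i = lam i • w i) (hH : (Hmat G δ).PosDef)
    (hδ : ∀ i, 1 - δ * lam i ≠ 0) (hB : w 0 ⬝ᵥ onesVec n ≠ 0) :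
    (1 - δ * lam 0) * (surplus G δ a (p0fn G δ a) - surplus G δ a (pUR a 0)) =
      -(resolventTail w lam 1 δ (onesVec n) (pUR a 0 - p0fn G δ a) / (w 0 ⬝ᵥ onesVec n)) *
          (w 0 ⬝ᵥ pUR a 0 - (1 - δ * lam 0) *
            resolventTail w lam 1 δ (onesVec n) (pUR a 0 - p0fn G δ a) /
              (2 * (w 0 ⬝ᵥ onesVec n))) +
        (1 - δ * lam 0) * resolventTail w lam 2 δ (pUR a 0 - p0fn G δ a)
          (pUR a 0 + (1 / 2 : ℝ) • (pUR a 0 - p0fn G δ a)) := by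
  set r := pUR a 0 - p0fn G δ a
  set s := resolventTail w lam 1 δ (onesVec n) r
  have hones : onesVec n ≠ 0 := fun h => one_ne_zero (congrFun h 0)
  have hden := (hH.dotProduct_mulVec_pos hones).ne'
  rw [star_trivial] at hden
  have hfoc := onesVec_dotProduct_Hmat_mulVec_pUR_sub_p0fn (a := a) hden
  rw [← pow_one (Hmat G δ), dotProduct_Hmat_pow_mulVec_eq_add_resolventTail horth heig hδ] at hfoc
  have hr₀ : w 0 ⬝ᵥ r = -(1 - δ * lam 0) * s / (w 0 ⬝ᵥ onesVec n) := by
    field_simp [hδ 0] at hfoc ⊢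
    linarith
  rw [surplus_p0fn_sub_surplus_pUR (isHermitian_iff_isSymm.mp hH.isHermitian),
    dotProduct_Hmat_pow_mulVec_eq_add_resolventTail horth heig hδ, dotProduct_add,
    dotProduct_smul, smul_eq_mul, hr₀]
  field_simp [hδ 0]
  ring

theorem tendsto_one_sub_mul_mul_surplus_sub
    (horth : ∀ i j, w i ⬝ᵥ w j = if i = j then (1 : ℝ) else 0)
    (heig : ∀ i, G *ᵥ w i = lam i • w i) (hgap : ∀ i, i ≠ 0 → lam i < lam 0)
    (hlam0 : 0 < lam 0) (hpd : ∀ δ ∈ Set.Ico (0 : ℝ) (1 / lam 0), (Hmat G δ).PosDef)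
    (hB : w 0 ⬝ᵥ onesVec n ≠ 0) :
    Tendsto (fun δ => (1 - δ * lam 0) *
        (surplus G δ a (p0fn G δ a) - surplus G δ a (pUR a 0))) (𝓝[<] (1 / lam 0))
      (𝓝 ((w 0 ⬝ᵥ pUR a 0) * (psiVec w lam ⬝ᵥ pUR a 0) / (w 0 ⬝ᵥ onesVec n) ^ 2)) := by
  set c := 1 / lam 0
  set B := w 0 ⬝ᵥ onesVec n
  set A := w 0 ⬝ᵥ pUR a 0
  set r₀ := pUR a 0 - (A / B) • onesVec n
  have hc : ∀ i, i ≠ 0 → 1 - c * lam i ≠ 0 :=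
    fun i hi => (one_sub_one_div_mul_pos hlam0 (hgap i hi)).ne'
  have hr : Tendsto (fun δ => pUR a 0 - p0fn G δ a) (𝓝[<] c) (𝓝 r₀) :=
    tendsto_const_nhds.sub ((tendsto_uniformPrice horth heig hgap hlam0 hB).smul_const _)
  have hs := tendsto_resolventTail (w := w) nhdsWithin_le_nhds hc
    (tendsto_const_nhds (x := onesVec n)) hr 1
  have hρ := tendsto_resolventTail (w := w) nhdsWithin_le_nhds hc hr
    ((tendsto_const_nhds (x := pUR a 0)).add (hr.const_smul (1 / 2 : ℝ))) 2
  have he := tendsto_one_sub_mul_nhdsLT hlam0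
  have hψ : psiVec w lam ⬝ᵥ pUR a 0 = -B * resolventTail w lam 1 c (onesVec n) r₀ := by
    have hr₀ : w 0 ⬝ᵥ r₀ = 0 := by
      rw [dotProduct_sub, dotProduct_smul, smul_eq_mul, div_mul_cancel₀ A hB, sub_self]
    have h := psiVec_dotProduct (w := w) (lam := lam) r₀
    rw [hr₀, mul_zero, zero_sub, dotProduct_sub, dotProduct_smul, psiVec_dotProduct_onesVec,
      smul_zero, sub_zero] at h
    rw [h, neg_mul]
  have hlim := ((hs.div_const B).neg.mul ((tendsto_const_nhds (x := A)).sub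
    ((he.mul hs).div_const (2 * B)))).add (he.mul hρ)
  convert hlim.congr' ?_ using 2
  · rw [hψ]
    field_simp
    ring
  · filter_upwards [Ioo_mem_nhdsLT (one_div_pos.mpr hlam0)] with δ hδ
    exact (one_sub_mul_mul_surplus_sub_eq horth heig (hpd δ ⟨hδ.1.le, hδ.2⟩)
      (one_sub_mul_ne_zero hlam0 hgap ⟨hδ.1.le, hδ.2⟩) hB).symm

end SurplusGap

theorem exists_pos_tendsto_surplus_gap_of_two_types {n : ℕ} [NeZero n]
    {G : Matrix (Fin n) (Fin n) ℝ} {w : Fin n → Fin n → ℝ} {lam : Fin n → ℝ}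
    (horth : ∀ i j, w i ⬝ᵥ w j = if i = j then (1 : ℝ) else 0)
    (heig : ∀ i, G *ᵥ w i = lam i • w i) (hgap : ∀ i, i ≠ 0 → lam i < lam 0)
    (hlam0 : 0 < lam 0) (hw0 : ∀ k, 0 < w 0 k)
    (hpd : ∀ δ ∈ Set.Ico (0 : ℝ) (1 / lam 0), (Hmat G δ).PosDef)
    {a : Fin n → ℝ} (ha : ∀ i, 0 < a i) (hnonreg : ∃ i : Fin n, i ≠ 0 ∧ w i ⬝ᵥ onesVec n ≠ 0)
    {V₁ V₂ : Finset (Fin n)} (hV₁ : V₁.Nonempty) (hV₂ : V₂.Nonempty)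
    (hdisj : Disjoint V₁ V₂) (hcover : V₁ ∪ V₂ = univ) {α β : ℝ} (hαβ : β < α)
    (hw₁ : ∀ i ∈ V₁, w 0 i = α) (hw₂ : ∀ j ∈ V₂, w 0 j = β) {ψ₁ ψ₂ : ℝ}
    (hψ₁ : ∀ i ∈ V₁, psiVec w lam i = ψ₁) (hψ₂ : ∀ j ∈ V₂, psiVec w lam j = ψ₂) :
    ∃ K > 0, Tendsto (fun δ => (1 - δ * lam 0) *
        (surplus G δ a (p0fn G δ a) - surplus G δ a (pUR a 0))) (𝓝[<] (1 / lam 0))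
      (𝓝 (K * ((∑ i ∈ V₁, a i) / #V₁ - (∑ j ∈ V₂, a j) / #V₂))) := by
  have hB : 0 < w 0 ⬝ᵥ onesVec n :=
    sum_pos (fun k _ => by simpa [onesVec] using hw0 k) univ_nonempty
  have hA : 0 < w 0 ⬝ᵥ pUR a 0 :=
    sum_pos (fun k _ => mul_pos (hw0 k) (by simp [pUR, ha k])) univ_nonempty
  have hψw : 0 < psiVec w lam ⬝ᵥ w 0 := by
    rw [psiVec_dotProduct_w_zero horth]
    exact resolventTail_onesVec_pos hlam0 hgap hnonreg
  have hψ := dotProduct_eq_mul_sub_average hdisj hcover hV₁ hV₂ hαβ.ne' hψ₁ hψ₂ hw₁ hw₂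
    (by simpa [dotProduct, onesVec] using psiVec_dotProduct_onesVec (w := w) (lam := lam)) a
  have hαβ' := sub_pos.mpr hαβ
  refine ⟨(w 0 ⬝ᵥ pUR a 0) / (2 * (w 0 ⬝ᵥ onesVec n) ^ 2) * (psiVec w lam ⬝ᵥ w 0 / (α - β)),
    by positivity, ?_⟩
  convert tendsto_one_sub_mul_mul_surplus_sub horth heig hgap hlam0 hpd hB.ne' using 2
  have hhalf : psiVec w lam ⬝ᵥ pUR a 0 = 1 / 2 * (psiVec w lam ⬝ᵥ a) := by
    simp [pUR, dotProduct_smul]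
  rw [hhalf, hψ]
  ring

theorem stmt17_general {n : ℕ} [NeZero n]
    (G : Matrix (Fin n) (Fin n) ℝ)
    (w : Fin n → Fin n → ℝ) (lam : Fin n → ℝ)
    (horth : ∀ i j, w i ⬝ᵥ w j = if i = j then (1 : ℝ) else 0)
    (heig : ∀ i, G *ᵥ w i = lam i • w i)
    (hgap : ∀ i, i ≠ 0 → lam i < lam 0)
    (hlam0 : 0 < lam 0)
    (hw0 : ∀ k, 0 < w 0 k)
    (hpd : ∀ δ ∈ Set.Ico (0 : ℝ) (1 / lam 0), (Hmat G δ).PosDef)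
    (a : Fin n → ℝ) (ha : ∀ i, 0 < a i)
    (haprop : ¬ ∃ t : ℝ, a = t • onesVec n)
    (hnonreg : ∃ i : Fin n, i ≠ 0 ∧ w i ⬝ᵥ onesVec n ≠ 0)
    (V1 V2 : Finset (Fin n)) (hV1 : V1.Nonempty) (hV2 : V2.Nonempty)
    (hdisj : Disjoint V1 V2) (hcover : V1 ∪ V2 = Finset.univ)
    (α β : ℝ) (hαβ : β < α)
    (hw0V1 : ∀ i ∈ V1, w 0 i = α) (hw0V2 : ∀ j ∈ V2, w 0 j = β)
    (ψ1 ψ2 : ℝ)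
    (hψV1 : ∀ i ∈ V1, psiVec w lam i = ψ1) (hψV2 : ∀ j ∈ V2, psiVec w lam j = ψ2) :
    ((∑ j ∈ V2, a j) / (V2.card : ℝ) < (∑ i ∈ V1, a i) / (V1.card : ℝ) →
      ∃ δbar ∈ Set.Ico (0 : ℝ) (1 / lam 0),
        ∀ δ ∈ Set.Ioo δbar (1 / lam 0),
          surplus G δ a (pUR a 0) < surplus G δ a (p0fn G δ a) ∧
          profit G δ a 0 (p0fn G δ a) < profit G δ a 0 (pUR a 0)) ∧
    ((∑ i ∈ V1, a i) / (V1.card : ℝ) < (∑ j ∈ V2, a j) / (V2.card : ℝ) →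
      ∃ δbbar ∈ Set.Ico (0 : ℝ) (1 / lam 0),
        ∀ δ ∈ Set.Ioo δbbar (1 / lam 0),
          surplus G δ a (p0fn G δ a) < surplus G δ a (pUR a 0) ∧
          profit G δ a 0 (p0fn G δ a) < profit G δ a 0 (pUR a 0)) := by
  have hc : 0 < 1 / lam 0 := one_div_pos.mpr hlam0
  obtain ⟨K, hK, hlim⟩ := exists_pos_tendsto_surplus_gap_of_two_types (a := a) horth heig hgap
    hlam0 hw0 hpd ha hnonreg hV1 hV2 hdisj hcover hαβ hw0V1 hw0V2 hψV1 hψV2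
  have hprofit : ∀ δ ∈ Set.Ico 0 (1 / lam 0),
      profit G δ a 0 (p0fn G δ a) < profit G δ a 0 (pUR a 0) :=
    fun δ hδ => profit_lt_profit_pUR (hpd δ hδ) (p0fn_ne_pUR haprop)
  have he₀ : ∀ δ ∈ Set.Ico 0 (1 / lam 0), 0 ≤ 1 - δ * lam 0 :=
    fun δ hδ => (one_sub_mul_pos hlam0 le_rfl hδ).le
  refine ⟨fun hlt => ?_, fun hlt => ?_⟩
  · obtain ⟨b, hb, hF⟩ := (mem_nhdsLT_iff_exists_mem_Ico_Ioo_subset hc).mp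
      (hlim.eventually (lt_mem_nhds (mul_pos hK (sub_pos.mpr hlt))))
    refine ⟨b, hb, fun δ hδ => ?_⟩
    have hδ' : δ ∈ Set.Ico 0 (1 / lam 0) := ⟨hb.1.trans hδ.1.le, hδ.2⟩
    exact ⟨sub_pos.mp (pos_of_mul_pos_right (hF hδ) (he₀ δ hδ')), hprofit δ hδ'⟩
  · obtain ⟨b, hb, hF⟩ := (mem_nhdsLT_iff_exists_mem_Ico_Ioo_subset hc).mp
      (hlim.eventually (gt_mem_nhds (mul_neg_of_pos_of_neg hK (sub_neg.mpr hlt))))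
    refine ⟨b, hb, fun δ hδ => ?_⟩
    have hδ' : δ ∈ Set.Ico 0 (1 / lam 0) := ⟨hb.1.trans hδ.1.le, hδ.2⟩
    exact ⟨sub_neg.mp (neg_of_mul_neg_right (hF hδ) (he₀ δ hδ')), hprofit δ hδ'⟩

theorem stmt17 {n : ℕ} [NeZero n]
    (G : Matrix (Fin n) (Fin n) ℝ) (hGsym : G.IsSymm)
    (hGnn : ∀ i j, 0 ≤ G i j) (hGdiag : ∀ i, G i i = 0)
    (w : Fin n → Fin n → ℝ) (lam : Fin n → ℝ)
    (horth : ∀ i j, w i ⬝ᵥ w j = if i = j then (1 : ℝ) else 0)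
    (heig : ∀ i, G *ᵥ w i = lam i • w i)
    (hgap : ∀ i, i ≠ 0 → lam i < lam 0)
    (hlam0 : 0 < lam 0)
    (hw0 : ∀ k, 0 < w 0 k)
    (hpd : ∀ δ ∈ Set.Ico (0 : ℝ) (1 / lam 0), (Hmat G δ).PosDef)
    (a : Fin n → ℝ) (ha : ∀ i, 0 < a i)
    (haprop : ¬ ∃ t : ℝ, a = t • onesVec n)
    (hnonreg : ∃ i : Fin n, i ≠ 0 ∧ w i ⬝ᵥ onesVec n ≠ 0)
    (V1 V2 : Finset (Fin n)) (hV1 : V1.Nonempty) (hV2 : V2.Nonempty)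
    (hdisj : Disjoint V1 V2) (hcover : V1 ∪ V2 = Finset.univ)
    (α β : ℝ) (hαβ : β < α)
    (hw0V1 : ∀ i ∈ V1, w 0 i = α) (hw0V2 : ∀ j ∈ V2, w 0 j = β)
    (ψ1 ψ2 : ℝ)
    (hψV1 : ∀ i ∈ V1, psiVec w lam i = ψ1) (hψV2 : ∀ j ∈ V2, psiVec w lam j = ψ2) :
    ((∑ j ∈ V2, a j) / (V2.card : ℝ) < (∑ i ∈ V1, a i) / (V1.card : ℝ) →
      ∃ δbar ∈ Set.Ico (0 : ℝ) (1 / lam 0),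
        ∀ δ ∈ Set.Ioo δbar (1 / lam 0),
          surplus G δ a (pUR a 0) < surplus G δ a (p0fn G δ a) ∧
          profit G δ a 0 (p0fn G δ a) < profit G δ a 0 (pUR a 0)) ∧
    ((∑ i ∈ V1, a i) / (V1.card : ℝ) < (∑ j ∈ V2, a j) / (V2.card : ℝ) →
      ∃ δbbar ∈ Set.Ico (0 : ℝ) (1 / lam 0),
        ∀ δ ∈ Set.Ioo δbbar (1 / lam 0),
          surplus G δ a (p0fn G δ a) < surplus G δ a (pUR a 0) ∧
          profit G δ a 0 (p0fn G δ a) < profit G δ a 0 (pUR a 0)) :=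
  stmt17_general G w lam horth heig hgap hlam0 hw0 hpd a ha haprop hnonreg V1 V2 hV1 hV2 hdisj
    hcover α β hαβ hw0V1 hw0V2 ψ1 ψ2 hψV1 hψV2
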